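/- arXiv:1404.6910 — 2 statements merged into one kernel-verified Lean document; each statement's English description precedes it below -/
import Mathlib

section
/- For every positive measurable function e : ℝ² → ℝ, every pair R, R' ∈ L^∞(ℝ²,ℂ), and every ξ ∈ ℝ², the following bound holds: |∫_{ℝ²} e^{i(x,ξ)} ( h(x, e(x)|1+R(x)|)(1+R(x)) − h(x, e(x)|1+R'(x)|)(1+R'(x)) ) dx| ≤ ( ‖β‖_{L¹(ℝ²)}(1 + ‖R'‖_{L^∞}) + ‖α‖_{L¹(ℝ²)} ) ‖R − R'‖_{L^∞}. -/
/-!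
Split the integrand as `h(R) (R - R') + (h(R) - h(R')) (1 + R')`. The first term is bounded
pointwise by `α ‖R - R'‖_∞` and, by the Lipschitz hypothesis on `h`, the second by
`β ‖R - R'‖_∞ (1 + ‖R'‖_∞)`; the oscillating factor has modulus one. Since `α` and `β` are
square integrable and supported in the bounded set `Ω`, they are integrable, and integrating the
pointwise bound gives the claim.
-/

open MeasureTheory
open scoped RealInnerProductSpace

lemma norm_mul_one_add_sub_mul_one_add_le {A : Type*} [SeminormedRing A] [NormOneClass A]
    {u v r r' : A} {a b M K : ℝ} (hu : ‖u‖ ≤ a) (huv : ‖u - v‖ ≤ b * ‖r - r'‖) (hb : 0 ≤ b)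
    (hr' : ‖r'‖ ≤ M) (hrr' : ‖r - r'‖ ≤ K) :
    ‖u * (1 + r) - v * (1 + r')‖ ≤ (b * (1 + M) + a) * K := by
  have hK : 0 ≤ K := (norm_nonneg _).trans hrr'
  have h1r' : ‖1 + r'‖ ≤ 1 + M := (norm_add_le _ _).trans (by rw [norm_one]; linarith)
  calc ‖u * (1 + r) - v * (1 + r')‖ = ‖u * (r - r') + (u - v) * (1 + r')‖ := by noncomm_ring
    _ ≤ ‖u‖ * ‖r - r'‖ + ‖u - v‖ * ‖1 + r'‖ :=
      norm_add_le_of_le (norm_mul_le _ _) (norm_mul_le _ _)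
    _ ≤ a * K + b * K * (1 + M) := by
      gcongr
      · exact (norm_nonneg _).trans hu
      · exact huv.trans (by gcongr)
    _ = (b * (1 + M) + a) * K := by ring

namespace MeasureTheory

variable {X : Type*} [MeasurableSpace X] {μ : Measure X}

lemma MemLp.integrable_of_eq_zero_of_notMem {E : Type*} [NormedAddCommGroup E]
    {f : X → E} {p : ENNReal} (hf : MemLp f p μ) (hp : 1 ≤ p) {s : Set X}
    (hfs : ∀ x ∉ s, f x = 0) (hs : μ s ≠ ⊤) : Integrable f μ :=
  memLp_one_iff_integrable.mp (hf.mono_exponent_of_measure_support_ne_top hfs hs hp)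

lemma toReal_eLpNorm_one_of_nonneg {f : X → ℝ} (hf : ∀ x, 0 ≤ f x)
    (hfm : AEStronglyMeasurable f μ) : (eLpNorm f 1 μ).toReal = ∫ x, f x ∂μ := by
  simp_rw [toReal_eLpNorm hfm, lpNorm_one_eq_integral_norm hfm, Real.norm_of_nonneg (hf _)]

end MeasureTheory

theorem stmt4_general
    (Ω : Set (EuclideanSpace ℝ (Fin 2)))
    (hΩb : Bornology.IsBounded Ω)
    (α β : EuclideanSpace ℝ (Fin 2) → ℝ)
    (hα0 : ∀ x, 0 ≤ α x) (hβ0 : ∀ x, 0 ≤ β x)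
    (hαΩ : ∀ x ∉ Ω, α x = 0) (hβΩ : ∀ x ∉ Ω, β x = 0)
    (hαL2 : MemLp α 2 volume) (hβL2 : MemLp β 2 volume)
    (h : EuclideanSpace ℝ (Fin 2) → ℝ → ℂ)
    (hhα : ∀ x s, 0 ≤ s → ‖h x s‖ ≤ α x)
    (hhβ : ∀ (x : EuclideanSpace ℝ (Fin 2)) (a : ℝ), 0 < a → ∀ w₁ w₂ : ℂ,
      ‖h x (a * ‖1 + w₁‖) - h x (a * ‖1 + w₂‖)‖ ≤ β x * ‖w₁ - w₂‖) :
    ∀ e : EuclideanSpace ℝ (Fin 2) → ℝ, Measurable e → (∀ x, 0 < e x) →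
    ∀ R R' : EuclideanSpace ℝ (Fin 2) → ℂ, MemLp R ⊤ volume → MemLp R' ⊤ volume →
    ∀ ξ : EuclideanSpace ℝ (Fin 2),
      ‖∫ x, Complex.exp (((⟪x, ξ⟫ : ℝ) : ℂ) * Complex.I) *
          (h x (e x * ‖1 + R x‖) * (1 + R x) - h x (e x * ‖1 + R' x‖) * (1 + R' x))‖ ≤
        ((eLpNorm β 1 volume).toReal * (1 + (eLpNorm R' ⊤ volume).toReal) +
            (eLpNorm α 1 volume).toReal) *
          (eLpNorm (fun x => R x - R' x) ⊤ volume).toReal := by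
  intro e _ he R R' hR hR' ξ
  have hΩ : volume Ω ≠ ⊤ := hΩb.measure_lt_top.ne
  have hα := hαL2.integrable_of_eq_zero_of_notMem one_le_two hαΩ hΩ
  have hβ := hβL2.integrable_of_eq_zero_of_notMem one_le_two hβΩ hΩ
  rw [toReal_eLpNorm_one_of_nonneg hα0 hα.1, toReal_eLpNorm_one_of_nonneg hβ0 hβ.1,
    toReal_eLpNorm hR'.1, toReal_eLpNorm (f := fun x => R x - R' x) (hR.sub hR').1,
    ← integral_mul_const, ← integral_add (hβ.mul_const _) hα, ← integral_mul_const]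
  refine norm_integral_le_of_norm_le (((hβ.mul_const _).add hα).mul_const _) ?_
  filter_upwards [ae_le_lpNorm_exponent_top hR', ae_le_lpNorm_exponent_top (hR.sub hR')]
    with x hR'x hRR'x
  rw [norm_mul, Complex.norm_exp_ofReal_mul_I, one_mul]
  exact norm_mul_one_add_sub_mul_one_add_le (hhα x _ (mul_nonneg (he x).le (norm_nonneg _)))
    (hhβ x (e x) (he x) (R x) (R' x)) (hβ0 x) hR'x hRR'x

/-- For every positive measurable `e`, every `R, R' ∈ L^∞(ℝ²,ℂ)` and every
`ξ ∈ ℝ²`, the oscillatory integral of the difference of the two nonlinear terms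
is bounded by `(‖β‖_{L¹}(1 + ‖R'‖_∞) + ‖α‖_{L¹})‖R - R'‖_∞`. -/
theorem stmt4
    (Ω : Set (EuclideanSpace ℝ (Fin 2)))
    (hΩb : Bornology.IsBounded Ω) (hΩm : MeasurableSet Ω)
    (α β : EuclideanSpace ℝ (Fin 2) → ℝ)
    (hα0 : ∀ x, 0 ≤ α x) (hβ0 : ∀ x, 0 ≤ β x)
    (hαΩ : ∀ x ∉ Ω, α x = 0) (hβΩ : ∀ x ∉ Ω, β x = 0)
    (hαL2 : MemLp α 2 volume) (hβL2 : MemLp β 2 volume)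
    (hαpos : eLpNorm α 2 volume ≠ 0) (hβpos : eLpNorm β 2 volume ≠ 0)
    (h : EuclideanSpace ℝ (Fin 2) → ℝ → ℂ)
    (hhα : ∀ x s, 0 ≤ s → ‖h x s‖ ≤ α x)
    (hhβ : ∀ (x : EuclideanSpace ℝ (Fin 2)) (a : ℝ), 0 < a → ∀ w₁ w₂ : ℂ,
      ‖h x (a * ‖1 + w₁‖) - h x (a * ‖1 + w₂‖)‖ ≤ β x * ‖w₁ - w₂‖)
    (hhm : ∀ e : EuclideanSpace ℝ (Fin 2) → ℝ, Measurable e → (∀ x, 0 < e x) →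
      ∀ R : EuclideanSpace ℝ (Fin 2) → ℂ, Measurable R →
        Measurable (fun x => h x (e x * ‖1 + R x‖))) :
    ∀ e : EuclideanSpace ℝ (Fin 2) → ℝ, Measurable e → (∀ x, 0 < e x) →
    ∀ R R' : EuclideanSpace ℝ (Fin 2) → ℂ, MemLp R ⊤ volume → MemLp R' ⊤ volume →
    ∀ ξ : EuclideanSpace ℝ (Fin 2),
      ‖∫ x, Complex.exp (((⟪x, ξ⟫ : ℝ) : ℂ) * Complex.I) *
          (h x (e x * ‖1 + R x‖) * (1 + R x) - h x (e x * ‖1 + R' x‖) * (1 + R' x))‖ ≤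
        ((eLpNorm β 1 volume).toReal * (1 + (eLpNorm R' ⊤ volume).toReal) +
            (eLpNorm α 1 volume).toReal) *
          (eLpNorm (fun x => R x - R' x) ⊤ volume).toReal :=
  stmt4_general Ω hΩb α β hα0 hβ0 hαΩ hβΩ hαL2 hβL2 h hhα hhβ
end

section
/- Let C₀ > 0 and let u : ℝ² → ℂ be the inverse Fourier transform of the indicator function of the closed disc {ξ ∈ ℝ² : |ξ| ≤ C₀}, i.e. u(x) = (1/4π²)∫_{|ξ| ≤ C₀} e^{−i(x,ξ)} dξ. Then for every σ < 1/2 the weighted integral ∫_{ℝ²} (1+|x|²)^σ |u(x)|² dx is finite; that is, u belongs to the weighted space L²_σ(ℝ²). -/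
/-!
Rotating `ξ` so that `⟪x, ξ⟫ = ‖x‖ ξ₀` and slicing the disc along `ξ₀` turns `u x` into the
one-dimensional oscillatory integral `∫_{-C₀}^{C₀} chord(t) e^{-i‖x‖t} dt`, where
`chord(t) = 2√(C₀² - t²)`. This integral decays like `‖x‖^{-3/2}`: on the two end pieces of
length `1/r` the chord is at most of order `√(C₀/r)`, and on the middle part two integrations by
parts give boundary terms of the same order, while the remaining integral of `|chord''|`
telescopes because the chord is concave. Hence `(1 + ‖x‖²)^σ |u x|² ≲ (1 + ‖x‖²)^{σ - 3/2}`,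
which is integrable on `ℝ²` exactly when `σ < 1/2`.
-/

open MeasureTheory Real Set
open scoped RealInnerProductSpace Interval

theorem EuclideanSpace.exists_linearIsometryEquiv_inner_eq {ι : Type*} [Fintype ι]
    (x : EuclideanSpace ℝ ι) (i : ι) :
    ∃ Q : EuclideanSpace ℝ ι ≃ₗᵢ[ℝ] EuclideanSpace ℝ ι, ∀ ξ, ⟪x, Q ξ⟫ = ‖x‖ * ξ i := by
  classical
  rcases eq_or_ne x 0 with rfl | hx
  · exact ⟨LinearIsometryEquiv.refl ℝ _, by simp⟩
  have hx' : ‖x‖ ≠ 0 := norm_ne_zero_iff.2 hx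
  have hunit : Orthonormal ℝ (({i} : Set ι).domRestrict fun _ ↦ ‖x‖⁻¹ • x) := by
    refine ⟨fun _ ↦ ?_, fun j k hjk ↦ (hjk (Subsingleton.elim j k)).elim⟩
    rw [domRestrict_apply, norm_smul, norm_inv, norm_norm, inv_mul_cancel₀ hx']
  obtain ⟨b, hb⟩ := hunit.exists_orthonormalBasis_extension_of_card_eq (by simp)
  have hbx : b.repr x = ‖x‖ • EuclideanSpace.single i 1 := by
    rw [← b.repr_self, ← LinearIsometryEquiv.map_smul, hb i rfl, smul_inv_smul₀ hx']
  refine ⟨b.repr.symm, fun ξ ↦ ?_⟩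
  rw [← LinearIsometryEquiv.inner_map_eq_flip, hbx, inner_smul_left,
    EuclideanSpace.inner_single_left]
  simp

theorem integral_closedBall_comp_inner {ι E : Type*} [Fintype ι] [NormedAddCommGroup E]
    [NormedSpace ℝ E] (x : EuclideanSpace ℝ ι) (i : ι) (R : ℝ) (h : ℝ → E) :
    ∫ ξ in Metric.closedBall (0 : EuclideanSpace ℝ ι) R, h ⟪x, ξ⟫ =
      ∫ ξ in Metric.closedBall (0 : EuclideanSpace ℝ ι) R, h (‖x‖ * ξ i) := by
  obtain ⟨Q, hQ⟩ := EuclideanSpace.exists_linearIsometryEquiv_inner_eq x i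
  rw [← Q.measurePreserving.setIntegral_preimage_emb Q.toHomeomorph.measurableEmbedding,
    Q.preimage_closedBall, map_zero]
  simp_rw [hQ]

theorem Real.volume_real_setOf_sq_le (c : ℝ) : volume.real {y : ℝ | y ^ 2 ≤ c} = 2 * √c := by
  rcases le_or_gt 0 c with hc | hc
  · have hS : {y : ℝ | y ^ 2 ≤ c} = Icc (-√c) √c := by ext y; simp [Real.sq_le hc]
    rw [hS, volume_real_Icc, max_eq_left (by linarith [Real.sqrt_nonneg c])]
    ring
  · have hS : {y : ℝ | y ^ 2 ≤ c} = ∅ :=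
      eq_empty_of_forall_notMem fun y hy ↦ (sq_nonneg y).not_gt (hy.trans_lt hc)
    simp [hS, Real.sqrt_eq_zero_of_nonpos hc.le]

/-- The length of the chord of the disc of radius `R` at abscissa `t`. -/
noncomputable def chord (R t : ℝ) : ℝ := 2 * √(R ^ 2 - t ^ 2)

@[fun_prop]
theorem continuous_chord (R : ℝ) : Continuous (chord R) := by
  unfold chord; fun_prop

theorem chord_nonneg (R t : ℝ) : 0 ≤ chord R t := by
  unfold chord; positivity

theorem chord_le_chord {R s t : ℝ} (h : s ^ 2 ≤ t ^ 2) : chord R t ≤ chord R s := by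
  unfold chord
  gcongr 2 * √(R ^ 2 - ?_)

theorem chord_eq_zero_of_sq_le {R t : ℝ} (h : R ^ 2 ≤ t ^ 2) : chord R t = 0 := by
  rw [chord, Real.sqrt_eq_zero_of_nonpos (sub_nonpos.2 h), mul_zero]

theorem hasDerivAt_chord {R t : ℝ} (h : t ^ 2 < R ^ 2) :
    HasDerivAt (chord R) (-2 * t / √(R ^ 2 - t ^ 2)) t := by
  have hsq : HasDerivAt (fun t : ℝ ↦ R ^ 2 - t ^ 2) (-(2 * t)) t := by
    simpa using (hasDerivAt_pow 2 t).const_sub (R ^ 2)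
  refine ((hsq.sqrt (by linarith)).const_mul 2).congr_deriv ?_
  field_simp

theorem hasDerivAt_chord_deriv {R t : ℝ} (h : t ^ 2 < R ^ 2) :
    HasDerivAt (fun t ↦ -2 * t / √(R ^ 2 - t ^ 2)) (-2 * R ^ 2 / √(R ^ 2 - t ^ 2) ^ 3) t := by
  have hsq : HasDerivAt (fun t : ℝ ↦ R ^ 2 - t ^ 2) (-(2 * t)) t := by
    simpa using (hasDerivAt_pow 2 t).const_sub (R ^ 2)
  have hpos : 0 < R ^ 2 - t ^ 2 := by linarith
  refine (((hasDerivAt_id t).const_mul (-2)).div (hsq.sqrt hpos.ne')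
    (Real.sqrt_pos.2 hpos).ne').congr_deriv ?_
  field_simp
  rw [Real.sq_sqrt hpos.le, id]
  ring

theorem integral_closedBall_fin_two_comp_apply_zero {E : Type*} [NormedAddCommGroup E]
    [NormedSpace ℝ E] [CompleteSpace E] {R : ℝ} (hR : 0 ≤ R) {f : ℝ → E} (hf : Continuous f) :
    ∫ ξ in Metric.closedBall (0 : EuclideanSpace ℝ (Fin 2)) R, f (ξ 0) =
      ∫ t in -R..R, chord R t • f t := by
  let φ := (MeasurableEquiv.toLp 2 (Fin 2 → ℝ)).symm.trans MeasurableEquiv.finTwoArrow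
  have hφ : MeasurePreserving φ volume (volume.prod volume) :=
    (volume_preserving_finTwoArrow ℝ).comp
      (EuclideanSpace.volume_preserving_symm_measurableEquiv_toLp (Fin 2))
  let S : Set (ℝ × ℝ) := {p | p.2 ^ 2 ≤ R ^ 2 - p.1 ^ 2}
  have hS : MeasurableSet S := measurableSet_le (by fun_prop) (by fun_prop)
  have hpre : φ ⁻¹' S = Metric.closedBall 0 R := by
    ext ξ
    simp only [S, φ, preimage_ofPred_eq, mem_ofPred_eq, MeasurableEquiv.trans_apply,
      MeasurableEquiv.toLp_symm_apply, MeasurableEquiv.finTwoArrow_apply, Metric.mem_closedBall,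
      dist_zero_right, EuclideanSpace.norm_eq, norm_eq_abs, sq_abs, Fin.sum_univ_two,
      Real.sqrt_le_left hR]
    exact le_sub_iff_add_le'
  have hint : IntegrableOn (fun p : ℝ × ℝ ↦ f p.1) S (volume.prod volume) := by
    rw [← hφ.integrableOn_comp_preimage φ.measurableEmbedding, hpre]
    exact (hf.comp (by fun_prop : Continuous fun ξ : EuclideanSpace ℝ (Fin 2) ↦ ξ 0)
      ).continuousOn.integrableOn_compact (isCompact_closedBall 0 R)
  have hslice (x : ℝ) : ∫ y, S.indicator (fun p ↦ f p.1) (x, y) = chord R x • f x := by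
    change ∫ y, {y : ℝ | y ^ 2 ≤ R ^ 2 - x ^ 2}.indicator (fun _ ↦ f x) y = _
    rw [integral_indicator_const _ (measurableSet_le (by fun_prop) (by fun_prop)),
      Real.volume_real_setOf_sq_le, chord]
  rw [← hpre]
  refine (hφ.setIntegral_preimage_emb φ.measurableEmbedding (fun p ↦ f p.1) S).trans ?_
  rw [← integral_indicator hS, integral_prod _ ((integrable_indicator_iff hS).2 hint)]
  simp_rw [hslice]
  rw [intervalIntegral.integral_of_le (by linarith),
    ← setIntegral_eq_integral_of_forall_compl_eq_zero fun t ht ↦ ?_]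
  rw [mem_Ioc, not_and_or, not_lt, not_le] at ht
  rw [chord_eq_zero_of_sq_le (by rcases ht with ht | ht <;> nlinarith), zero_smul]

noncomputable def expNegI (s : ℝ) : ℂ := Complex.exp (-(s : ℂ) * Complex.I)

@[fun_prop]
theorem continuous_expNegI : Continuous expNegI := by
  unfold expNegI; fun_prop

theorem norm_expNegI (s : ℝ) : ‖expNegI s‖ = 1 := by
  rw [expNegI, ← Complex.ofReal_neg, Complex.norm_exp_ofReal_mul_I]

theorem hasDerivAt_I_div_mul_expNegI {r : ℝ} (hr : r ≠ 0) (t : ℝ) :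
    HasDerivAt (fun t ↦ Complex.I / r * expNegI (r * t)) (expNegI (r * t)) t := by
  have hlin : HasDerivAt (fun t : ℝ ↦ -((r * t : ℝ) : ℂ) * Complex.I) (-r * Complex.I) t := by
    simpa using (((hasDerivAt_id t).const_mul r).ofReal_comp.neg).mul_const Complex.I
  refine (hlin.cexp.const_mul (Complex.I / r)).congr_deriv ?_
  have hI : Complex.I / r * (-r * Complex.I) = 1 := by
    have hr' : (r : ℂ) ≠ 0 := by exact_mod_cast hr
    field_simp
    rw [Complex.I_sq, neg_neg]
  rw [expNegI, mul_comm (Complex.exp _), ← mul_assoc, hI, one_mul]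

section Oscillatory

variable {f f' f'' : ℝ → ℝ} {a b r : ℝ}

theorem integral_smul_expNegI_eq (hr : r ≠ 0) (hf : ∀ t ∈ [[a, b]], HasDerivAt f (f' t) t)
    (hf' : IntervalIntegrable f' volume a b) :
    ∫ t in a..b, f t • expNegI (r * t) =
      Complex.I / r * (f b • expNegI (r * b) - f a • expNegI (r * a) -
        ∫ t in a..b, f' t • expNegI (r * t)) := by
  rw [intervalIntegral.integral_smul_deriv_eq_deriv_smul hf
    (fun t _ ↦ hasDerivAt_I_div_mul_expNegI hr t) hf'
    ((by fun_prop : Continuous fun t ↦ expNegI (r * t)).intervalIntegrable _ _)]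
  simp_rw [← mul_smul_comm, intervalIntegral.integral_const_mul, mul_sub]

theorem norm_integral_smul_expNegI_le (hr : r ≠ 0) (hf : ∀ t ∈ [[a, b]], HasDerivAt f (f' t) t)
    (hf' : IntervalIntegrable f' volume a b) :
    ‖∫ t in a..b, f t • expNegI (r * t)‖ ≤
      (|f a| + |f b| + ‖∫ t in a..b, f' t • expNegI (r * t)‖) / |r| := by
  rw [integral_smul_expNegI_eq hr hf hf', norm_mul, norm_div, Complex.norm_I, Complex.norm_real,
    Real.norm_eq_abs, one_div_mul_eq_div]
  gcongr
  refine (norm_sub_le _ _).trans ?_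
  gcongr
  refine (norm_sub_le _ _).trans_eq ?_
  simp only [norm_smul, norm_expNegI, mul_one, Real.norm_eq_abs, add_comm]

theorem norm_integral_smul_expNegI_le_of_hasDerivAt₂ (hab : a ≤ b) (hr : r ≠ 0)
    (hf : ∀ t ∈ [[a, b]], HasDerivAt f (f' t) t) (hf' : ∀ t ∈ [[a, b]], HasDerivAt f' (f'' t) t)
    (hf'' : IntervalIntegrable f'' volume a b) :
    ‖∫ t in a..b, f t • expNegI (r * t)‖ ≤
      (|f a| + |f b| + (|f' a| + |f' b| + ∫ t in a..b, |f'' t|) / |r|) / |r| := by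
  have hf'_int : IntervalIntegrable f' volume a b :=
    ContinuousOn.intervalIntegrable fun t ht ↦ (hf' t ht).continuousAt.continuousWithinAt
  refine (norm_integral_smul_expNegI_le hr hf hf'_int).trans ?_
  gcongr
  refine (norm_integral_smul_expNegI_le hr hf' hf'').trans ?_
  gcongr
  refine (intervalIntegral.norm_integral_le_integral_norm hab).trans_eq ?_
  simp_rw [norm_smul, norm_expNegI, mul_one, Real.norm_eq_abs]

end Oscillatory

theorem norm_integral_chord_smul_expNegI_le {R s p q r : ℝ} (hpq : p ≤ q)
    (h : ∀ t ∈ Ioc p q, s ^ 2 ≤ t ^ 2) :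
    ‖∫ t in p..q, chord R t • expNegI (r * t)‖ ≤ chord R s * (q - p) := by
  refine (intervalIntegral.norm_integral_le_of_norm_le_const fun t ht ↦ ?_).trans_eq
    (by rw [abs_of_nonneg (sub_nonneg.2 hpq)])
  rw [uIoc_of_le hpq] at ht
  rw [norm_smul, norm_expNegI, mul_one, Real.norm_eq_abs, abs_of_nonneg (chord_nonneg R t)]
  exact chord_le_chord (h t ht)

theorem norm_integral_chord_smul_expNegI_le_of_lt {R a r : ℝ} (ha : 0 ≤ a) (haR : a < R)
    (hr : 0 < r) :
    ‖∫ t in -a..a, chord R t • expNegI (r * t)‖ ≤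
      4 * √(R ^ 2 - a ^ 2) / r + 8 * a / (√(R ^ 2 - a ^ 2) * r ^ 2) := by
  have hlt : ∀ t ∈ [[-a, a]], t ^ 2 < R ^ 2 := by
    intro t ht
    rw [uIcc_of_le (by linarith), mem_Icc] at ht
    nlinarith
  have hw : 0 < √(R ^ 2 - a ^ 2) := Real.sqrt_pos.2 (by nlinarith)
  set g'' : ℝ → ℝ := fun t ↦ -2 * R ^ 2 / √(R ^ 2 - t ^ 2) ^ 3
  have hg''_cont : ContinuousOn g'' [[-a, a]] := by
    refine continuousOn_const.div (by fun_prop) fun t ht ↦ ?_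
    exact pow_ne_zero 3 (Real.sqrt_pos.2 (sub_pos.2 (hlt t ht))).ne'
  -- the chord is concave, so `∫ |chord''|` is the total variation `chord'(-a) - chord'(a)`
  have hg''_int : ∫ t in -a..a, |g'' t| = 4 * a / √(R ^ 2 - a ^ 2) := by
    have hnonpos (t : ℝ) : g'' t ≤ 0 :=
      div_nonpos_of_nonpos_of_nonneg (by nlinarith) (by positivity)
    simp_rw [abs_of_nonpos (hnonpos _), intervalIntegral.integral_neg]
    rw [intervalIntegral.integral_eq_sub_of_hasDerivAt
      (fun t ht ↦ hasDerivAt_chord_deriv (hlt t ht)) hg''_cont.intervalIntegrable, neg_sq]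
    ring
  refine (norm_integral_smul_expNegI_le_of_hasDerivAt₂ (by linarith) hr.ne'
    (fun t ht ↦ hasDerivAt_chord (hlt t ht)) (fun t ht ↦ hasDerivAt_chord_deriv (hlt t ht))
    hg''_cont.intervalIntegrable).trans_eq ?_
  rw [hg''_int, abs_of_pos hr]
  simp only [chord, neg_sq, abs_div, abs_mul, abs_neg, abs_two, abs_of_nonneg ha, abs_of_pos hw]
  field_simp
  ring

/-- The integral `∫_{‖ξ‖ ≤ R} e^{-i⟪x, ξ⟫} dξ` as a function of `r = ‖x‖`. -/
noncomputable def chordFourier (R r : ℝ) : ℂ := ∫ t in -R..R, chord R t • expNegI (r * t)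

theorem continuous_chordFourier (R : ℝ) : Continuous (chordFourier R) :=
  intervalIntegral.continuous_parametric_intervalIntegral_of_continuous' (by fun_prop) _ _

theorem norm_chordFourier_le_of_lt {R a r : ℝ} (ha : 0 ≤ a) (haR : a < R) (hr : 0 < r) :
    ‖chordFourier R r‖ ≤ 4 * (R - a) * √(R ^ 2 - a ^ 2) + 4 * √(R ^ 2 - a ^ 2) / r +
      8 * a / (√(R ^ 2 - a ^ 2) * r ^ 2) := by
  have hint (p q : ℝ) : IntervalIntegrable (fun t ↦ chord R t • expNegI (r * t)) volume p q :=
    (by fun_prop : Continuous _).intervalIntegrable p q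
  have hleft : ‖∫ t in -R..-a, chord R t • expNegI (r * t)‖ ≤ chord R a * (-a - -R) :=
    norm_integral_chord_smul_expNegI_le (by linarith) fun t ht ↦ by nlinarith [ht.2]
  have hright : ‖∫ t in a..R, chord R t • expNegI (r * t)‖ ≤ chord R a * (R - a) :=
    norm_integral_chord_smul_expNegI_le haR.le fun t ht ↦ by nlinarith [ht.1]
  have hmid := norm_integral_chord_smul_expNegI_le_of_lt (R := R) ha haR hr
  rw [chordFourier, ← intervalIntegral.integral_add_adjacent_intervals (hint _ (-a)) (hint _ R),
    ← intervalIntegral.integral_add_adjacent_intervals (hint (-a) a) (hint _ R)]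
  refine (norm_add_le _ _).trans ((add_le_add le_rfl (norm_add_le _ _)).trans ?_)
  rw [chord] at hleft hright
  linarith

theorem norm_chordFourier_le_of_inv_le {R r : ℝ} (hr : 0 < r) (hrR : r⁻¹ ≤ R) :
    ‖chordFourier R r‖ ≤ 24 * r⁻¹ * √(R * r⁻¹) := by
  set δ := r⁻¹ with hδ
  have hδ0 : 0 < δ := inv_pos.2 hr
  set v := √(R * δ)
  set w := √(R ^ 2 - (R - δ) ^ 2)
  have hv : 0 < v := Real.sqrt_pos.2 (by nlinarith)
  have hvv : v ^ 2 = R * δ := Real.sq_sqrt (by nlinarith)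
  have hww : w ^ 2 = δ * (2 * R - δ) := by rw [Real.sq_sqrt (by nlinarith)]; ring
  have hvw : v ≤ w := Real.sqrt_le_sqrt (by nlinarith)
  have hwv : w ≤ 2 * v := by
    rw [← pow_le_pow_iff_left₀ (Real.sqrt_nonneg _) (by positivity) two_ne_zero, hww, mul_pow,
      hvv]
    nlinarith
  -- cutting off the ends at distance `1/r` makes all three pieces of order `r⁻¹ √(R / r)`
  have hsplit : ‖chordFourier R r‖ ≤
      4 * (R - (R - δ)) * w + 4 * w / r + 8 * (R - δ) / (w * r ^ 2) :=
    norm_chordFourier_le_of_lt (by linarith) (by linarith) hr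
  have e1 : 4 * w / r = 4 * w * δ := by rw [hδ, div_eq_mul_inv]
  have e2 : 8 * (R - δ) / (w * r ^ 2) = 8 * (R - δ) / w * δ ^ 2 := by
    rw [hδ, inv_pow]; field_simp
  rw [e1, e2] at hsplit
  have htail : 8 * (R - δ) / w * δ ^ 2 ≤ 8 * δ * v := by
    rw [div_mul_eq_mul_div, div_le_iff₀ (hv.trans_le hvw)]
    nlinarith [mul_le_mul_of_nonneg_left hvw hv.le]
  nlinarith

theorem inv_mul_sqrt_inv_le_two_mul_rpow {r : ℝ} (hr : 1 ≤ r) :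
    r⁻¹ * √r⁻¹ ≤ 2 * (1 + r ^ 2) ^ (-(3 / 4 : ℝ)) := by
  have hr0 : 0 < r := by linarith
  have hpow : r⁻¹ * √r⁻¹ = (r ^ 2) ^ (-(3 / 4 : ℝ)) := by
    rw [Real.sqrt_eq_rpow, ← Real.rpow_neg_one, ← Real.rpow_mul hr0.le, ← Real.rpow_add hr0,
      ← Real.rpow_natCast, ← Real.rpow_mul hr0.le]
    norm_num
  have hmono : (r ^ 2) ^ (-(3 / 4 : ℝ)) ≤ ((1 + r ^ 2) / 2) ^ (-(3 / 4 : ℝ)) :=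
    Real.rpow_le_rpow_of_nonpos (by positivity) (by nlinarith) (by norm_num)
  have htwo : (2 : ℝ) ^ (3 / 4 : ℝ) ≤ 2 := by
    simpa using Real.rpow_le_rpow_of_exponent_le one_le_two (by norm_num : (3 / 4 : ℝ) ≤ 1)
  rw [hpow]
  refine hmono.trans ?_
  rw [Real.div_rpow (by positivity) zero_le_two, Real.rpow_neg zero_le_two, div_inv_eq_mul,
    mul_comm]
  gcongr

theorem exists_norm_chordFourier_le {R : ℝ} (hR : 0 < R) :
    ∃ K, ∀ r, 0 ≤ r → ‖chordFourier R r‖ ≤ K * (1 + r ^ 2) ^ (-(3 / 4 : ℝ)) := by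
  set R₀ := max 1 R⁻¹
  set K₀ := 4 * R ^ 2 * (1 + R₀ ^ 2) ^ (3 / 4 : ℝ)
  refine ⟨max K₀ (48 * √R), fun r hr ↦ ?_⟩
  rcases le_or_gt r R₀ with hrR₀ | hR₀r
  · have htriv : ‖chordFourier R r‖ ≤ chord R 0 * (R - -R) :=
      norm_integral_chord_smul_expNegI_le (by linarith) fun t _ ↦ by simp [sq_nonneg]
    have hmono : (1 + R₀ ^ 2) ^ (-(3 / 4 : ℝ)) ≤ (1 + r ^ 2) ^ (-(3 / 4 : ℝ)) :=
      Real.rpow_le_rpow_of_nonpos (by positivity) (by gcongr) (by norm_num)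
    calc ‖chordFourier R r‖ ≤ 4 * R ^ 2 := by
          refine htriv.trans_eq ?_
          rw [chord, zero_pow two_ne_zero, sub_zero, Real.sqrt_sq hR.le]
          ring
      _ = K₀ * (1 + R₀ ^ 2) ^ (-(3 / 4 : ℝ)) := by
          rw [Real.rpow_neg (by positivity), mul_assoc, mul_inv_cancel₀ (by positivity), mul_one]
      _ ≤ _ := by gcongr; exact le_max_left _ _
  · have hr1 : 1 ≤ r := (le_max_left _ _).trans hR₀r.le
    have hrinv : r⁻¹ ≤ R := by
      rw [inv_le_comm₀ (by linarith) hR]; exact (le_max_right _ _).trans hR₀r.le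
    calc ‖chordFourier R r‖ ≤ 24 * r⁻¹ * √(R * r⁻¹) :=
          norm_chordFourier_le_of_inv_le (by linarith) hrinv
      _ = 24 * √R * (r⁻¹ * √r⁻¹) := by rw [Real.sqrt_mul hR.le]; ring
      _ ≤ 24 * √R * (2 * (1 + r ^ 2) ^ (-(3 / 4 : ℝ))) := by
          gcongr ?_ * ?_
          exact inv_mul_sqrt_inv_le_two_mul_rpow hr1
      _ ≤ _ := by
          rw [← mul_assoc]
          gcongr
          linarith [le_max_right K₀ (48 * √R)]

theorem integrable_one_add_norm_sq_rpow_mul_norm_sq {E F : Type*} [NormedAddCommGroup E]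
    [NormedSpace ℝ E] [FiniteDimensional ℝ E] [MeasurableSpace E] [BorelSpace E]
    {μ : Measure E} [μ.IsAddHaarMeasure] [NormedAddCommGroup F] {u : E → F} {K s σ : ℝ}
    (hu : AEStronglyMeasurable u μ) (hbound : ∀ x, ‖u x‖ ≤ K * (1 + ‖x‖ ^ 2) ^ (-s))
    (hσ : (Module.finrank ℝ E : ℝ) < 4 * s - 2 * σ) :
    Integrable (fun x ↦ (1 + ‖x‖ ^ 2) ^ σ * ‖u x‖ ^ 2) μ := by
  refine ((integrable_rpow_neg_one_add_norm_sq hσ).const_mul (K ^ 2)).mono'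
    ((Measurable.aestronglyMeasurable (by fun_prop)).mul (hu.norm.pow 2))
    (.of_forall fun x ↦ ?_)
  have hpos : 0 < 1 + ‖x‖ ^ 2 := by positivity
  rw [Real.norm_eq_abs, abs_of_nonneg (by positivity)]
  calc (1 + ‖x‖ ^ 2) ^ σ * ‖u x‖ ^ 2
      ≤ (1 + ‖x‖ ^ 2) ^ σ * (K * (1 + ‖x‖ ^ 2) ^ (-s)) ^ 2 := by gcongr; exact hbound x
    _ = K ^ 2 * (1 + ‖x‖ ^ 2) ^ (-(4 * s - 2 * σ) / 2) := by
        rw [mul_pow, ← Real.rpow_natCast ((1 + ‖x‖ ^ 2) ^ (-s)), ← Real.rpow_mul hpos.le,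
          mul_left_comm, ← Real.rpow_add hpos]
        ring_nf

theorem integral_closedBall_exp_inner_eq_chordFourier {R : ℝ} (hR : 0 ≤ R)
    (x : EuclideanSpace ℝ (Fin 2)) :
    ∫ ξ in Metric.closedBall (0 : EuclideanSpace ℝ (Fin 2)) R,
      Complex.exp (-((⟪x, ξ⟫ : ℝ) : ℂ) * Complex.I) = chordFourier R ‖x‖ := by
  rw [show (fun ξ ↦ Complex.exp (-((⟪x, ξ⟫ : ℝ) : ℂ) * Complex.I)) = fun ξ ↦ expNegI ⟪x, ξ⟫ from
    rfl, integral_closedBall_comp_inner x 0 R expNegI]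
  exact integral_closedBall_fin_two_comp_apply_zero hR (f := fun t ↦ expNegI (‖x‖ * t))
    (by fun_prop)

/-- The inverse Fourier transform `u` of the indicator function of the closed
disc `{|ξ| ≤ C₀}` in `ℝ²` belongs to the weighted space `L²_σ(ℝ²)` for every
`σ < 1/2`, i.e. `∫ (1+|x|²)^σ |u(x)|² dx < ∞`. -/
theorem stmt9 (C₀ : ℝ) (hC₀ : 0 < C₀) (u : EuclideanSpace ℝ (Fin 2) → ℂ)
    (hu : ∀ x, u x = (1 / (4 * (π : ℂ) ^ 2)) *
      ∫ ξ in Metric.closedBall (0 : EuclideanSpace ℝ (Fin 2)) C₀,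
        Complex.exp (-((⟪x, ξ⟫ : ℝ) : ℂ) * Complex.I)) :
    ∀ σ : ℝ, σ < 1 / 2 →
      Integrable (fun x : EuclideanSpace ℝ (Fin 2) =>
        (1 + ‖x‖ ^ 2) ^ σ * ‖u x‖ ^ 2) volume := by
  intro σ hσ
  have hu' : u = fun x ↦ 1 / (4 * (π : ℂ) ^ 2) * chordFourier C₀ ‖x‖ := by
    ext x
    rw [hu, integral_closedBall_exp_inner_eq_chordFourier hC₀.le]
  obtain ⟨K, hK⟩ := exists_norm_chordFourier_le hC₀
  refine integrable_one_add_norm_sq_rpow_mul_norm_sq (K := ‖1 / (4 * (π : ℂ) ^ 2)‖ * K)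
    (s := 3 / 4) ?_ (fun x ↦ ?_) (by rw [finrank_euclideanSpace_fin]; push_cast; linarith)
  · rw [hu']
    exact (continuous_const.mul ((continuous_chordFourier C₀).comp continuous_norm)
      ).aestronglyMeasurable
  · rw [hu', norm_mul, mul_assoc]
    gcongr
    exact hK _ (norm_nonneg x)
end
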